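/- Let G = (V, A, c) be a finite weighted directed graph with no negative cycles and let B > 0. If some s–t path is traversable from a full battery of capacity B (i.e., δ_B(s, t) < ∞), then the minimum δ_B(s, t) is attained by a simple s–t path; in particular δ_B(s, t) equals the minimum of d_B(P') over simple s–t paths P'. -/

import Mathlib

open scoped Classical

/-- The clamped addition `x ⊕_B y = [x + y]₀ᴮ` on `ℝ ∪ {∞}` (modeled inside `EReal`;
inputs are never `⊥`). -/
noncomputable def eplus (B : ℝ) (x y : EReal) : EReal :=
  if x + y < 0 then 0 else if x + y ≤ (B : EReal) then x + y else ⊤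

/-- `batt B b cst i` is the charge `b_i` of the battery after traversing the first `i`
arcs of a path whose `i`-th arc (0-indexed) has cost `cst i`, starting from charge `b`. -/
noncomputable def batt (B b : ℝ) (cst : ℕ → ℝ) : ℕ → ℝ
  | 0 => b
  | i + 1 => min (batt B b cst i - cst i) B

/-- The path with arc costs `cst 0, …, cst (k-1)` is traversable from initial charge `b`. -/
def Trav (B b : ℝ) (cst : ℕ → ℝ) (k : ℕ) : Prop :=
  ∀ i, i < k → cst i ≤ batt B b cst i

/-- The energetic cost `d_{B,b}(P) = b - b_k` of a path with arc costs
`cst 0, …, cst (k-1)`, or `∞` if not traversable from initial charge `b`. -/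
noncomputable def dE (B b : ℝ) (cst : ℕ → ℝ) (k : ℕ) : EReal :=
  if Trav B b cst k then ((b - batt B b cst k : ℝ) : EReal) else ⊤

/-- `u 0, u 1, …, u k` is a path in the graph with arc relation `Arc`. -/
def IsPath {V : Type*} (Arc : V → V → Prop) (u : ℕ → V) (k : ℕ) : Prop :=
  ∀ i, i < k → Arc (u i) (u (i + 1))

/-- The energetic cost `δ_{B,b}(s,t)`: the minimum of `d_{B,b}(P)` over all `s`–`t`
paths `P` (`∞` if there is none). -/
noncomputable def deltaE {V : Type*} (Arc : V → V → Prop) (c : V → V → ℝ)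
    (B b : ℝ) (s t : V) : EReal :=
  sInf { x : EReal | ∃ (u : ℕ → V) (k : ℕ), IsPath Arc u k ∧ u 0 = s ∧ u k = t ∧
    x = dE B b (fun i => c (u i) (u (i + 1))) k }

/-- The standard distance `δ(s,t)`: the infimum of total costs of `s`–`t` paths. -/
noncomputable def distE {V : Type*} (Arc : V → V → Prop) (c : V → V → ℝ)
    (s t : V) : EReal :=
  sInf { x : EReal | ∃ (u : ℕ → V) (k : ℕ), IsPath Arc u k ∧ u 0 = s ∧ u k = t ∧
    x = ((∑ i ∈ Finset.range k, c (u i) (u (i + 1)) : ℝ) : EReal) }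

/-- The graph has no negative cycles. -/
def NoNegCycles {V : Type*} (Arc : V → V → Prop) (c : V → V → ℝ) : Prop :=
  ∀ (u : ℕ → V) (k : ℕ), IsPath Arc u k → u k = u 0 → 1 ≤ k →
    0 ≤ ∑ i ∈ Finset.range k, c (u i) (u (i + 1))

/-!
Cutting a cycle `u i … u j` (with `u i = u j`) out of a traversable path keeps it traversable
and does not lower the final charge: the charge can only drop by at least the cycle's cost
while driving around it (clamping at `B` only loses energy), and that cost is nonnegative, so
the car reaches `u j` on the shortened path with at least as much charge, and the charge is
monotone in the initial charge. Repeating this turns any `s`–`t` path into a simple one that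
is at least as good, so `δ_B(s, t)` is an infimum over simple paths only. Simple paths have
fewer than `|V|` arcs, so that infimum runs over a finite set and is attained.
-/

open Finset

section Battery

variable {B b : ℝ} {cst : ℕ → ℝ}

lemma batt_congr {c₁ c₂ : ℕ → ℝ} {k : ℕ} (h : ∀ i < k, c₁ i = c₂ i) :
    ∀ n ≤ k, batt B b c₁ n = batt B b c₂ n := by
  intro n hn
  induction n with
  | zero => rfl
  | succ n ih =>
    show min (batt B b c₁ n - c₁ n) B = min (batt B b c₂ n - c₂ n) B
    rw [ih (by omega), h n (by omega)]

lemma trav_congr {c₁ c₂ : ℕ → ℝ} {k : ℕ} (h : ∀ i < k, c₁ i = c₂ i) :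
    Trav B b c₁ k ↔ Trav B b c₂ k := by
  refine forall₂_congr fun i hi => ?_
  rw [h i hi, batt_congr h i hi.le]

lemma dE_congr {c₁ c₂ : ℕ → ℝ} {k : ℕ} (h : ∀ i < k, c₁ i = c₂ i) :
    dE B b c₁ k = dE B b c₂ k := by
  simp only [dE, trav_congr h, batt_congr h k le_rfl]

lemma batt_mono_initial {b' : ℝ} (h : b ≤ b') (n : ℕ) : batt B b cst n ≤ batt B b' cst n := by
  induction n with
  | zero => exact h
  | succ n ih => exact min_le_min (by linarith) le_rfl

lemma Trav.mono_initial {b' : ℝ} {n : ℕ} (h : b ≤ b') (ht : Trav B b cst n) :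
    Trav B b' cst n :=
  fun i hi => (ht i hi).trans (batt_mono_initial h i)

lemma batt_add (i n : ℕ) :
    batt B b cst (i + n) = batt B (batt B b cst i) (fun m => cst (i + m)) n := by
  induction n with
  | zero => rfl
  | succ n ih =>
    show min (batt B b cst (i + n) - cst (i + n)) B = _
    rw [ih]
    rfl

lemma trav_add_iff (i n : ℕ) :
    Trav B b cst (i + n) ↔
      Trav B b cst i ∧ Trav B (batt B b cst i) (fun m => cst (i + m)) n := by
  refine ⟨fun ht => ⟨fun m hm => ht m (by omega), fun m hm => ?_⟩, fun ⟨h₁, h₂⟩ m hm => ?_⟩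
  · rw [← batt_add]
    exact ht (i + m) (by omega)
  · obtain hmi | him := lt_or_ge m i
    · exact h₁ m hmi
    · obtain ⟨m, rfl⟩ := Nat.exists_eq_add_of_le him
      rw [batt_add]
      exact h₂ m (by omega)

lemma batt_le_sub_sum (n : ℕ) : batt B b cst n ≤ b - ∑ m ∈ range n, cst m := by
  induction n with
  | zero => simp [batt]
  | succ n ih =>
    rw [sum_range_succ]
    calc batt B b cst (n + 1) ≤ batt B b cst n - cst n := min_le_left _ _
      _ ≤ _ := by linarith

lemma dE_le_dE {c₁ c₂ : ℕ → ℝ} {k₁ k₂ : ℕ} (h₁ : Trav B b c₁ k₁)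
    (hbatt : batt B b c₂ k₂ ≤ batt B b c₁ k₁) : dE B b c₁ k₁ ≤ dE B b c₂ k₂ := by
  unfold dE
  rw [if_pos h₁]
  split_ifs
  · exact EReal.coe_le_coe_iff.2 (by linarith)
  · exact le_top

end Battery

def excise {α : Type*} (u : ℕ → α) (i d : ℕ) : ℕ → α :=
  fun m => if m < i then u m else u (m + d)

lemma excise_of_lt {α : Type*} (u : ℕ → α) {i d m : ℕ} (h : m < i) : excise u i d m = u m :=
  if_pos h

lemma excise_of_ge {α : Type*} (u : ℕ → α) {i d m : ℕ} (h : i ≤ m) :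
    excise u i d m = u (m + d) :=
  if_neg (by omega)

lemma excise_of_le {α : Type*} {u : ℕ → α} {i d m : ℕ} (hu : u i = u (i + d)) (h : m ≤ i) :
    excise u i d m = u m := by
  obtain h | rfl := h.lt_or_eq
  · exact excise_of_lt u h
  · rw [excise_of_ge u le_rfl, hu]

lemma trav_excise_and_batt_le {B b : ℝ} {cst : ℕ → ℝ} {i d n : ℕ}
    (hcyc : 0 ≤ ∑ m ∈ range d, cst (i + m)) (ht : Trav B b cst (i + d + n)) :
    Trav B b (excise cst i d) (i + n) ∧
      batt B b cst (i + d + n) ≤ batt B b (excise cst i d) (i + n) := by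
  have hpre : ∀ m < i, excise cst i d m = cst m := fun m hm => excise_of_lt cst hm
  have hsuf : (fun m => excise cst i d (i + m)) = fun m => cst (i + d + m) := by
    funext m
    rw [excise_of_ge cst (by omega)]
    congr 1
    omega
  have hcycle : batt B b cst (i + d) ≤ batt B b cst i := by
    rw [batt_add]
    linarith [batt_le_sub_sum (B := B) (b := batt B b cst i) (cst := fun m => cst (i + m)) d]
  rw [trav_add_iff] at ht
  obtain ⟨ht₁, ht₂⟩ := ht
  rw [trav_add_iff] at ht₁
  have hbi : batt B b (excise cst i d) i = batt B b cst i := batt_congr hpre i le_rfl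
  refine ⟨(trav_add_iff i n).2 ⟨(trav_congr hpre).2 ht₁.1, ?_⟩, ?_⟩
  · rw [hsuf, hbi]
    exact ht₂.mono_initial hcycle
  · rw [batt_add (i + d) n, batt_add i n, hsuf, hbi]
    exact batt_mono_initial hcycle n

section Paths

variable {V : Type*} {Arc : V → V → Prop} {c : V → V → ℝ}

def arcCosts (c : V → V → ℝ) (u : ℕ → V) : ℕ → ℝ :=
  fun i => c (u i) (u (i + 1))

lemma arcCosts_excise {u : ℕ → V} {i d : ℕ} (hu : u i = u (i + d)) :
    arcCosts c (excise u i d) = excise (arcCosts c u) i d := by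
  funext m
  obtain hm | hm := lt_or_ge m i
  · rw [excise_of_lt _ hm]
    exact congrArg₂ c (excise_of_le hu hm.le) (excise_of_le hu hm)
  · rw [excise_of_ge _ hm]
    refine congrArg₂ c (excise_of_ge u hm) ?_
    rw [excise_of_ge u (by omega : i ≤ m + 1), Nat.add_right_comm]

lemma IsPath.excise {u : ℕ → V} {i d n : ℕ} (hp : IsPath Arc u (i + d + n))
    (hu : u i = u (i + d)) : IsPath Arc (excise u i d) (i + n) := by
  intro m hm
  obtain hmi | him := lt_or_ge m i
  · rw [excise_of_le hu hmi.le, excise_of_le hu hmi]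
    exact hp m (by omega)
  · rw [excise_of_ge u him, excise_of_ge u (by omega : i ≤ m + 1), Nat.add_right_comm]
    exact hp (m + d) (by omega)

lemma exists_simple_path_batt_ge (hNC : NoNegCycles Arc c) (B b : ℝ) (k : ℕ) (u : ℕ → V)
    (hp : IsPath Arc u k) (ht : Trav B b (arcCosts c u) k) :
    ∃ (u' : ℕ → V) (k' : ℕ), IsPath Arc u' k' ∧ u' 0 = u 0 ∧ u' k' = u k ∧
      (∀ i ≤ k', ∀ j ≤ k', u' i = u' j → i = j) ∧ Trav B b (arcCosts c u') k' ∧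
      batt B b (arcCosts c u) k ≤ batt B b (arcCosts c u') k' := by
  induction k using Nat.strong_induction_on generalizing u with
  | _ k ih =>
  by_cases hsimple : ∀ i ≤ k, ∀ j ≤ k, u i = u j → i = j
  · exact ⟨u, k, hp, rfl, rfl, hsimple, ht, le_rfl⟩
  obtain ⟨i, j, hij, hjk, hu⟩ : ∃ i j, i < j ∧ j ≤ k ∧ u i = u j := by
    push Not at hsimple
    obtain ⟨i, hi, j, hj, hu, hne⟩ := hsimple
    rcases hne.lt_or_gt with h | h
    exacts [⟨i, j, h, hj, hu⟩, ⟨j, i, h, hi, hu.symm⟩]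
  obtain ⟨d, rfl⟩ := Nat.exists_eq_add_of_le hij.le
  obtain ⟨n, rfl⟩ := Nat.exists_eq_add_of_le hjk
  have hcyc : 0 ≤ ∑ m ∈ range d, arcCosts c u (i + m) :=
    hNC (fun m => u (i + m)) d (fun m hm => hp (i + m) (by omega)) hu.symm (by omega)
  obtain ⟨htrav, hbatt⟩ := trav_excise_and_batt_le hcyc ht
  rw [← arcCosts_excise hu] at htrav hbatt
  obtain ⟨u', k', hp', h0, hk, hsimple', ht', hbatt'⟩ :=
    ih (i + n) (by omega) (excise u i d) (hp.excise hu) htrav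
  refine ⟨u', k', hp', ?_, ?_, hsimple', ht', hbatt.trans hbatt'⟩
  · rw [h0, excise_of_le hu (Nat.zero_le i)]
  · rw [hk, excise_of_ge u (Nat.le_add_right i n)]
    congr 1
    omega

def simplePathCosts (Arc : V → V → Prop) (c : V → V → ℝ) (B b : ℝ) (s t : V) : Set EReal :=
  { x | ∃ (u : ℕ → V) (k : ℕ), IsPath Arc u k ∧ u 0 = s ∧ u k = t ∧
    (∀ i ≤ k, ∀ j ≤ k, u i = u j → i = j) ∧ x = dE B b (arcCosts c u) k }

lemma deltaE_eq_sInf_simplePathCosts (hNC : NoNegCycles Arc c) (B b : ℝ) (s t : V) :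
    deltaE Arc c B b s t = sInf (simplePathCosts Arc c B b s t) := by
  refine le_antisymm (sInf_le_sInf ?_) (le_sInf ?_)
  · rintro x ⟨u, k, hp, hs, ht, -, hx⟩
    exact ⟨u, k, hp, hs, ht, hx⟩
  rintro x ⟨u, k, hp, hs, ht, hx⟩
  by_cases htrav : Trav B b (arcCosts c u) k
  · obtain ⟨u', k', hp', hs', ht', hsimple', htrav', hbatt⟩ :=
      exists_simple_path_batt_ge hNC B b k u hp htrav
    exact (sInf_le (s := simplePathCosts Arc c B b s t)
      ⟨u', k', hp', hs'.trans hs, ht'.trans ht, hsimple', rfl⟩).trans (hx ▸ dE_le_dE htrav' hbatt)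
  · exact hx ▸ le_top.trans_eq (if_neg htrav).symm

lemma Set.finite_range_of_eqOn_Iic {α β : Type*} [Finite α] (k : ℕ) {F : (ℕ → α) → β}
    (hF : ∀ u v, Set.EqOn u v (Set.Iic k) → F u = F v) : (Set.range F).Finite := by
  refine (Set.finite_range fun f : Fin (k + 1) → α => F fun i => f ⟨min i k, by omega⟩).subset ?_
  rintro _ ⟨u, rfl⟩
  refine ⟨fun j => u j, hF _ _ fun i hi => ?_⟩
  simp only [min_eq_left (Set.mem_Iic.1 hi)]

lemma lt_card_of_injOn_Iic [Fintype V] {u : ℕ → V} {k : ℕ} (hu : Set.InjOn u (Set.Iic k)) :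
    k < Fintype.card V := by
  have hinj : Function.Injective fun m : Fin (k + 1) => u m :=
    fun a b hab => Fin.ext (hu (Set.mem_Iic.2 (by omega)) (Set.mem_Iic.2 (by omega)) hab)
  simpa using Fintype.card_le_of_injective _ hinj

lemma simplePathCosts_finite [Fintype V] (B b : ℝ) (s t : V) :
    (simplePathCosts Arc c B b s t).Finite := by
  refine ((Set.finite_Iio (Fintype.card V)).biUnion fun k _ =>
    Set.finite_range_of_eqOn_Iic k (F := fun u => dE B b (arcCosts c u) k) ?_).subset ?_
  · exact fun u v huv => dE_congr fun i hi => by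
      simp only [arcCosts, huv (Set.mem_Iic.2 hi.le), huv (Set.mem_Iic.2 (Nat.succ_le_of_lt hi))]
  · rintro _ ⟨u, k, -, -, -, hsimple, rfl⟩
    exact Set.mem_biUnion (lt_card_of_injOn_Iic fun i hi j hj => hsimple i hi j hj) ⟨u, rfl⟩

end Paths

theorem delta_attained_by_simple_path_general {V : Type*} [Fintype V] (Arc : V → V → Prop)
    (c : V → V → ℝ) (hNC : NoNegCycles Arc c) (B : ℝ) (s t : V)
    (hfin : deltaE Arc c B B s t < ⊤) :
    (∃ (u : ℕ → V) (k : ℕ), IsPath Arc u k ∧ u 0 = s ∧ u k = t ∧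
      (∀ i ≤ k, ∀ j ≤ k, u i = u j → i = j) ∧
      dE B B (fun i => c (u i) (u (i + 1))) k = deltaE Arc c B B s t) ∧
    deltaE Arc c B B s t =
      sInf { x : EReal | ∃ (u : ℕ → V) (k : ℕ), IsPath Arc u k ∧ u 0 = s ∧ u k = t ∧
        (∀ i ≤ k, ∀ j ≤ k, u i = u j → i = j) ∧
        x = dE B B (fun i => c (u i) (u (i + 1))) k } := by
  have hδ := deltaE_eq_sInf_simplePathCosts hNC B B s t
  obtain ⟨x, hx, -⟩ := sInf_lt_iff.1 (hδ ▸ hfin)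
  obtain ⟨u, k, hp, hs, ht, hsimple, hu⟩ :=
    Set.Nonempty.csInf_mem ⟨x, hx⟩ (simplePathCosts_finite B B s t)
  exact ⟨⟨u, k, hp, hs, ht, hsimple, hu.symm.trans hδ.symm⟩, hδ⟩

/-- in a finite graph with no negative cycles, if `δ_B(s,t) < ∞` then
the minimum is attained by a simple `s`–`t` path; in particular `δ_B(s,t)` equals the
minimum of `d_B(P')` over simple `s`–`t` paths `P'`. -/
theorem delta_attained_by_simple_path {V : Type*} [Fintype V] (Arc : V → V → Prop)
    (c : V → V → ℝ) (hNC : NoNegCycles Arc c) (B : ℝ) (hB : 0 < B) (s t : V)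
    (hfin : deltaE Arc c B B s t < ⊤) :
    (∃ (u : ℕ → V) (k : ℕ), IsPath Arc u k ∧ u 0 = s ∧ u k = t ∧
      (∀ i ≤ k, ∀ j ≤ k, u i = u j → i = j) ∧
      dE B B (fun i => c (u i) (u (i + 1))) k = deltaE Arc c B B s t) ∧
    deltaE Arc c B B s t =
      sInf { x : EReal | ∃ (u : ℕ → V) (k : ℕ), IsPath Arc u k ∧ u 0 = s ∧ u k = t ∧
        (∀ i ≤ k, ∀ j ≤ k, u i = u j → i = j) ∧
        x = dE B B (fun i => c (u i) (u (i + 1))) k } :=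
  delta_attained_by_simple_path_general Arc c hNC B s t hfin
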